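/- arXiv:0904.4102 — 4 statements merged into one kernel-verified Lean document; each statement's English description precedes it below -/
import Mathlib

section
/- Let A be a Banach algebra, f ∈ wap(A), and G ∈ A** with a_α → G in the weak* topology for a net (a_α) in A. Then f·a_α converges to f·G weakly in A*, where ⟨f·G, b⟩ = ⟨G, b·f⟩ (equivalently f·G = G·f formed via the left module action). -/
open Filter Topology ContinuousLinearMap

universe u v

namespace Arens

variable (A : Type u) [NonUnitalNormedRing A] [NormedSpace ℝ A]
  [IsScalarTower ℝ A A] [SMulCommClass ℝ A A]

/-- The bidual of `A`. -/
abbrev Bidual : Type u := (A →L[ℝ] ℝ) →L[ℝ] ℝ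

/-- `dotF A f a = f·a`, i.e. `⟨f·a, b⟩ = ⟨f, a*b⟩`, as a bundled bilinear map. -/
noncomputable def dotF : (A →L[ℝ] ℝ) →L[ℝ] A →L[ℝ] (A →L[ℝ] ℝ) :=
  (((ContinuousLinearMap.compL ℝ A A ℝ).flip).comp (ContinuousLinearMap.mul ℝ A)).flip

/-- `circF A f a = a∘f`, i.e. `⟨a∘f, b⟩ = ⟨f, b*a⟩`, as a bundled bilinear map. -/
noncomputable def circF : (A →L[ℝ] ℝ) →L[ℝ] A →L[ℝ] (A →L[ℝ] ℝ) :=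
  (((ContinuousLinearMap.compL ℝ A A ℝ).flip).comp ((ContinuousLinearMap.mul ℝ A).flip)).flip

variable {A}

/-- `fdot f a = f·a : ⟨f·a, b⟩ = ⟨f, ab⟩`. -/
noncomputable abbrev fdot (f : A →L[ℝ] ℝ) (a : A) : A →L[ℝ] ℝ := dotF A f a

/-- `circ a f = a∘f : ⟨a∘f, b⟩ = ⟨f, ba⟩`. -/
noncomputable abbrev circ (a : A) (f : A →L[ℝ] ℝ) : A →L[ℝ] ℝ := circF A f a

/-- The first Arens product on the bidual: `⟨F·G, f⟩ = ⟨F, G·f⟩` with `⟨G·f, a⟩ = ⟨G, f·a⟩`. -/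
noncomputable def arens1 (F G : Bidual A) : Bidual A :=
  F.comp ((ContinuousLinearMap.compL ℝ A (A →L[ℝ] ℝ) ℝ G).comp (dotF A))

/-- The second Arens product on the bidual: `⟨F∘G, f⟩ = ⟨G, f∘F⟩` with `⟨f∘F, a⟩ = ⟨F, a∘f⟩`. -/
noncomputable def arens2 (F G : Bidual A) : Bidual A :=
  G.comp ((ContinuousLinearMap.compL ℝ A (A →L[ℝ] ℝ) ℝ F).comp (circF A))

variable (A)

/-- The canonical embedding of `A` into its bidual. -/
noncomputable def incl : A →L[ℝ] Bidual A := ContinuousLinearMap.apply ℝ ℝ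

variable {A}

/-- A functional `f ∈ A*` is weakly almost periodic iff the two Arens products agree at `f`. -/
def wap (f : A →L[ℝ] ℝ) : Prop := ∀ F G : Bidual A, arens1 F G f = arens2 F G f

end Arens

namespace Arens

variable {A : Type u} [NonUnitalNormedRing A] [NormedSpace ℝ A]
  [IsScalarTower ℝ A A] [SMulCommClass ℝ A A] [CompleteSpace A]

/-- If `f ∈ wap(A)` and `a_α → G` weak* in `A**`, then `f·a_α → f·G` weakly in `A*`,
where `⟨f·G, b⟩ = ⟨G, b∘f⟩`. -/
theorem stmt4 (f : A →L[ℝ] ℝ) (hf : wap f) {ι : Type v} (l : Filter ι) [l.NeBot]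
    (a : ι → A) (G : Bidual A)
    (ha : ∀ g : A →L[ℝ] ℝ, Tendsto (fun i => g (a i)) l (𝓝 (G g))) :
    ∀ F : Bidual A,
      Tendsto (fun i => F (fdot f (a i))) l (𝓝 (F (G.comp (circF A f)))) := by
  intro F
  have h := ha (F.comp (dotF A f))
  have key : G (F.comp (dotF A f)) = F (G.comp (circF A f)) := by
    have := hf G F
    simpa [arens1, arens2] using this
  simpa [key] using h

end Arens
end

section
/- Let A be a Banach algebra and c ∈ A with the LW*W-property such that A* = A*·c. Then A**·c ⊆ Z₁ ∩ Z₂, and c·A* ⊆ wap(A) ⊆ A*·c. -/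
open Filter Topology ContinuousLinearMap

universe u v

set_option linter.unusedSectionVars false
set_option maxHeartbeats 1000000

namespace Arens
universe w
variable {A : Type u} [NonUnitalNormedRing A] [NormedSpace ℝ A]
  [IsScalarTower ℝ A A] [SMulCommClass ℝ A A]

example (f : A →L[ℝ] ℝ) (a x : A) : fdot f a x = f (a * x) := rfl
example (a : A) (f : A →L[ℝ] ℝ) (x : A) : circ a f x = f (x * a) := rfl
example (a : A) (g : A →L[ℝ] ℝ) : incl A a g = g a := rfl

noncomputable def Gdot (G : Bidual A) (g : A →L[ℝ] ℝ) : A →L[ℝ] ℝ :=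
  ((ContinuousLinearMap.compL ℝ A (A →L[ℝ] ℝ) ℝ G).comp (dotF A)) g

noncomputable def oF (f : A →L[ℝ] ℝ) (F : Bidual A) : A →L[ℝ] ℝ :=
  ((ContinuousLinearMap.compL ℝ A (A →L[ℝ] ℝ) ℝ F).comp (circF A)) f

example (F G : Bidual A) (f : A →L[ℝ] ℝ) : arens1 F G f = F (Gdot G f) := rfl
example (F G : Bidual A) (f : A →L[ℝ] ℝ) : arens2 F G f = G (oF f F) := rfl
example (G : Bidual A) (g : A →L[ℝ] ℝ) (x : A) : Gdot G g x = G (fdot g x) := rfl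
example (F : Bidual A) (f : A →L[ℝ] ℝ) (x : A) : oF f F x = F (circ x f) := rfl


open scoped Classical in
/-- ultrafilter limit of a real sequence (junk value if no limit) -/
noncomputable def ulim (r : ℕ → ℝ) : ℝ :=
  if h : ∃ x, Tendsto r (Filter.hyperfilter ℕ) (𝓝 x) then h.choose else 0

theorem ulim_spec {r : ℕ → ℝ} (h : ∃ x, Tendsto r (Filter.hyperfilter ℕ) (𝓝 x)) :
    Tendsto r (Filter.hyperfilter ℕ) (𝓝 (ulim r)) := by
  classical
  rw [ulim]
  rw [dif_pos h]
  exact h.choose_spec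

theorem ulim_eq {r : ℕ → ℝ} {x : ℝ} (h : Tendsto r (Filter.hyperfilter ℕ) (𝓝 x)) :
    ulim r = x :=
  tendsto_nhds_unique (ulim_spec ⟨x, h⟩) h

theorem exists_ulim {r : ℕ → ℝ} {C : ℝ} (h : ∀ n, |r n| ≤ C) :
    ∃ x, |x| ≤ C ∧ Tendsto r (Filter.hyperfilter ℕ) (𝓝 x) := by
  have hK : IsCompact (Set.Icc (-C) C) := isCompact_Icc
  have hle : ↑((Filter.hyperfilter ℕ).map r) ≤ Filter.principal (Set.Icc (-C) C) := by
    rw [Ultrafilter.coe_map, Filter.le_principal_iff, Filter.mem_map]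
    filter_upwards [Filter.univ_mem] with n _
    exact Set.mem_Icc.2 (abs_le.1 (h n))
  obtain ⟨x, hx, hx2⟩ := hK.ultrafilter_le_nhds _ hle
  refine ⟨x, abs_le.2 hx, ?_⟩
  rwa [Ultrafilter.coe_map] at hx2

theorem tendsto_ulim {r : ℕ → ℝ} {C : ℝ} (h : ∀ n, |r n| ≤ C) :
    Tendsto r (Filter.hyperfilter ℕ) (𝓝 (ulim r)) :=
  ulim_spec ⟨_, (exists_ulim h).choose_spec.2⟩

/-- eventually (≥ m) constant sequences have that constant as ulim -/
theorem ulim_eventually {r : ℕ → ℝ} {x : ℝ} {m : ℕ} (h : ∀ n, m ≤ n → r n = x) :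
    ulim r = x := by
  refine ulim_eq (Tendsto.congr' ?_ tendsto_const_nhds)
  have : ∀ᶠ n in Filter.atTop, x = r n := by
    filter_upwards [Filter.eventually_ge_atTop m] with n hn; exact (h n hn).symm
  exact this.filter_mono Nat.hyperfilter_le_atTop




/-- pointwise ultrafilter limit of a uniformly bounded sequence of functionals -/
noncomputable def ulimCLM {X : Type*} [NormedAddCommGroup X] [NormedSpace ℝ X] (φ : ℕ → X →L[ℝ] ℝ) (C : ℝ) (hφ : ∀ n x, |φ n x| ≤ C * ‖x‖) :
    X →L[ℝ] ℝ :=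
  LinearMap.mkContinuous
    { toFun := fun x => ulim (fun n => φ n x)
      map_add' := by
        intro x y
        have hx := tendsto_ulim (r := fun n => φ n x) (fun n => hφ n x)
        have hy := tendsto_ulim (r := fun n => φ n y) (fun n => hφ n y)
        refine ulim_eq ?_
        simpa using hx.add hy
      map_smul' := by
        intro c x
        have hx := tendsto_ulim (r := fun n => φ n x) (fun n => hφ n x)
        refine ulim_eq ?_
        simpa using hx.const_mul c }
    C
    (by
      intro x
      have hx := tendsto_ulim (r := fun n => φ n x) (fun n => hφ n x)
      have : |ulim (fun n => φ n x)| ≤ C * ‖x‖ :=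
        le_of_tendsto hx.abs (Filter.Eventually.of_forall (fun n => hφ n x))
      simpa [Real.norm_eq_abs] using this)

theorem ulimCLM_tendsto {X : Type*} [NormedAddCommGroup X] [NormedSpace ℝ X] (φ : ℕ → X →L[ℝ] ℝ) (C : ℝ) (hφ : ∀ n x, |φ n x| ≤ C * ‖x‖) (x : X) :
    Tendsto (fun n => φ n x) (Filter.hyperfilter ℕ) (𝓝 (ulimCLM φ C hφ x)) :=
  tendsto_ulim (fun n => hφ n x)

theorem ulimCLM_eventually {X : Type*} [NormedAddCommGroup X] [NormedSpace ℝ X] (φ : ℕ → X →L[ℝ] ℝ) (C : ℝ) (hφ : ∀ n x, |φ n x| ≤ C * ‖x‖)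
    {x : X} {y : ℝ} {m : ℕ} (h : ∀ n, m ≤ n → φ n x = y) : ulimCLM φ C hφ x = y :=
  ulim_eventually h



theorem hc_seq {c : A}
    (hc : ∀ (ι : Type w) (l : Filter ι), l.NeBot →
      ∀ fa : ι → (A →L[ℝ] ℝ),
        (∀ b : A, Tendsto (fun i => circ c (fa i) b) l (𝓝 0)) →
        ∀ F : Bidual A, Tendsto (fun i => F (circ c (fa i))) l (𝓝 0))
    (σ : ℕ → A →L[ℝ] ℝ) (k : A →L[ℝ] ℝ)
    (hσ : ∀ b : A, Tendsto (fun m => σ m (b * c)) (Filter.hyperfilter ℕ) (𝓝 (k (b * c))))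
    (Φ : Bidual A) :
    Tendsto (fun m => Φ (circ c (σ m))) (Filter.hyperfilter ℕ) (𝓝 (Φ (circ c k))) := by
  have hne : (Filter.map (ULift.up.{w} : ℕ → ULift ℕ) (Filter.hyperfilter ℕ)).NeBot :=
    Filter.NeBot.map (Filter.hyperfilter ℕ).neBot _
  have key := hc (ULift.{w} ℕ) (Filter.map ULift.up (Filter.hyperfilter ℕ)) hne
    (fun i => σ i.down - k) ?_ Φ
  · have heq : ∀ m : ℕ, Φ (circ c (σ m - k)) = Φ (circ c (σ m)) - Φ (circ c k) := by
      intro m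
      have : circ c (σ m - k) = circ c (σ m) - circ c k := by
        show circF A (σ m - k) c = _
        rw [map_sub]; rfl
      rw [this, map_sub]
    rw [Filter.tendsto_map'_iff] at key
    have key2 : Tendsto (fun m : ℕ => Φ (circ c (σ m)) - Φ (circ c k))
        (Filter.hyperfilter ℕ) (𝓝 0) := by
      refine key.congr ?_
      intro m
      exact heq m
    simpa using tendsto_sub_nhds_zero_iff.1 key2
  · intro b
    rw [Filter.tendsto_map'_iff]
    have : ∀ m : ℕ, circ c (σ m - k) b = σ m (b * c) - k (b * c) := by
      intro m
      have : circ c (σ m - k) = circ c (σ m) - circ c k := by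
        show circF A (σ m - k) c = _
        rw [map_sub]; rfl
      rw [this]; rfl
    have key3 : Tendsto (fun m : ℕ => σ m (b * c) - k (b * c))
        (Filter.hyperfilter ℕ) (𝓝 0) := tendsto_sub_nhds_zero_iff.2 (hσ b)
    exact key3.congr (fun m => (this m).symm)



theorem helly (F : Bidual A) (S : Finset (A →L[ℝ] ℝ)) :
    ∃ a : A, ‖a‖ ≤ ‖F‖ + 1 ∧ ∀ g ∈ S, g a = F g := by
  classical
  let ι := {g : A →L[ℝ] ℝ // g ∈ S}
  haveI : Fintype ι := FinsetCoe.fintype S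
  let L : ι → A →ₗ[ℝ] ℝ := fun i => (i.1 : A →ₗ[ℝ] ℝ)
  let T : A →ₗ[ℝ] (ι → ℝ) := LinearMap.pi L
  let t : ι → ℝ := fun i => F i.1
  -- a useful expansion of functionals on `ι → ℝ`
  have hexp : ∀ (f : Module.Dual ℝ (ι → ℝ)) (v : ι → ℝ),
      f v = ∑ i : ι, v i * f (Pi.single i 1) := by
    intro f v
    have hv : ∑ i : ι, v i • (Pi.single i (1:ℝ) : ι → ℝ) = v := by
      funext j
      rw [Finset.sum_apply]
      simp [Pi.single_apply]
      rw [Finset.sum_eq_single j (fun b _ hb => if_neg (Ne.symm hb)) (fun h => absurd (Finset.mem_univ j) h), if_pos rfl]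
    conv_lhs => rw [← hv]
    rw [map_sum]
    exact Finset.sum_congr rfl (fun i _ => by rw [map_smul, smul_eq_mul])
  -- Step 1 : t is in the range of T
  have ht : t ∈ LinearMap.range T := by
    by_contra h
    obtain ⟨f, hft, hfmap⟩ :=
      Submodule.exists_dual_map_eq_bot_of_notMem h inferInstance
    set cc : ι → ℝ := fun i => f (Pi.single i 1) with hcc
    have hphi : (∑ i : ι, cc i • (i.1 : A →L[ℝ] ℝ)) = 0 := by
      ext a
      have h1 : f (T a) = 0 := by
        have hmem : f (T a) ∈ (LinearMap.range T).map f :=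
          Submodule.mem_map_of_mem (LinearMap.mem_range_self T a)
        rw [hfmap] at hmem
        exact hmem
      have h2 : f (T a) = ∑ i : ι, (i.1 : A →L[ℝ] ℝ) a * cc i := hexp f (T a)
      simp only [ContinuousLinearMap.sum_apply, ContinuousLinearMap.smul_apply,
        ContinuousLinearMap.zero_apply, smul_eq_mul]
      rw [← h1, h2]
      exact Finset.sum_congr rfl (fun i _ => mul_comm _ _)
    have hFt : f t = 0 := by
      rw [hexp f t]
      have : ∑ i : ι, t i * cc i = F (∑ i : ι, cc i • (i.1 : A →L[ℝ] ℝ)) := by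
        rw [map_sum]
        refine Finset.sum_congr rfl (fun i _ => ?_)
        rw [map_smul, smul_eq_mul]
        exact mul_comm _ _
      rw [this, hphi, map_zero]
    exact hft hFt
  obtain ⟨a', ha'⟩ := ht
  have ha'' : ∀ i : ι, (i.1 : A →L[ℝ] ℝ) a' = F i.1 := fun i => congrFun ha' i
  -- Step 2 : norm control via the quotient
  let Tc : A →L[ℝ] (ι → ℝ) := ContinuousLinearMap.pi (fun i => (i.1 : A →L[ℝ] ℝ))
  let N : Submodule ℝ A := LinearMap.ker (Tc : A →ₗ[ℝ] (ι → ℝ))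
  haveI hNc : IsClosed (N : Set A) := ContinuousLinearMap.isClosed_ker Tc
  by_cases h0 : (Submodule.Quotient.mk a' : A ⧸ N) = 0
  · have haN : a' ∈ N := (Submodule.Quotient.mk_eq_zero N).1 h0
    refine ⟨0, by rw [norm_zero]; positivity, fun g hg => ?_⟩
    have h2 : Tc a' = 0 := haN
    have h3 : g a' = 0 := congrFun h2 (⟨g, hg⟩ : ι)
    rw [map_zero, ← ha'' ⟨g, hg⟩, h3]
  · obtain ⟨ψ, hψ1, hψ2⟩ := exists_dual_vector ℝ (Submodule.Quotient.mk a' : A ⧸ N) (norm_ne_zero_iff.2 h0)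
    let πL : A →L[ℝ] (A ⧸ N) :=
      LinearMap.mkContinuous N.mkQ 1
        (fun x => by simpa using Submodule.Quotient.norm_mk_le (S := N) x)
    have hπ : ‖πL‖ ≤ 1 := LinearMap.mkContinuous_norm_le _ zero_le_one _
    let φ : A →L[ℝ] ℝ := ψ.comp πL
    have hφker : ⨅ i : ι, LinearMap.ker (L i) ≤ LinearMap.ker (φ : A →ₗ[ℝ] ℝ) := by
      intro x hx
      rw [← LinearMap.ker_pi] at hx
      have hxT : T x = 0 := hx
      have hxN : x ∈ N := by
        show Tc x = 0
        funext i
        exact congrFun hxT i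
      have hπx : πL x = 0 := by
        show N.mkQ x = 0
        simpa using (Submodule.Quotient.mk_eq_zero N).2 hxN
      show ψ (πL x) = 0
      rw [hπx, map_zero]
    obtain ⟨cc, hcc⟩ := (Submodule.mem_span_range_iff_exists_fun ℝ).1
      (mem_span_of_iInf_ker_le_ker (𝕜 := ℝ) hφker)
    let φ2 : A →L[ℝ] ℝ := ∑ i : ι, cc i • (i.1 : A →L[ℝ] ℝ)
    have hφ2 : φ2 = φ := by
      ext a
      have := LinearMap.congr_fun hcc a
      simp only [LinearMap.coe_sum, Finset.sum_apply, LinearMap.smul_apply,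
        smul_eq_mul] at this
      simpa [φ2, L, ContinuousLinearMap.sum_apply, ContinuousLinearMap.smul_apply,
        smul_eq_mul] using this
    have hψ2' : ψ (Submodule.Quotient.mk a') = ‖(Submodule.Quotient.mk a' : A ⧸ N)‖ := by
      exact_mod_cast hψ2
    have hval : ‖(Submodule.Quotient.mk a' : A ⧸ N)‖ = F φ2 := by
      rw [← hψ2']
      have h1 : ψ (Submodule.Quotient.mk a') = φ a' := rfl
      rw [h1, ← hφ2]
      have h2 : φ2 a' = ∑ i : ι, cc i * ((i.1 : A →L[ℝ] ℝ) a') := by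
        simp [φ2, ContinuousLinearMap.sum_apply, ContinuousLinearMap.smul_apply, smul_eq_mul]
      rw [h2]
      rw [map_sum]
      refine Finset.sum_congr rfl (fun i _ => ?_)
      rw [map_smul, smul_eq_mul, ha'']
    have hφn : ‖φ2‖ ≤ 1 := by
      rw [hφ2]
      calc ‖φ‖ ≤ ‖ψ‖ * ‖πL‖ := ContinuousLinearMap.opNorm_comp_le _ _
      _ ≤ 1 * 1 := by rw [hψ1]; exact mul_le_mul_of_nonneg_left hπ zero_le_one
      _ = 1 := one_mul 1
    have hq : ‖(Submodule.Quotient.mk a' : A ⧸ N)‖ ≤ ‖F‖ := by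
      rw [hval]
      calc F φ2 ≤ |F φ2| := le_abs_self _
      _ ≤ ‖F‖ * ‖φ2‖ := by
          have := F.le_opNorm φ2
          rwa [Real.norm_eq_abs] at this
      _ ≤ ‖F‖ * 1 := mul_le_mul_of_nonneg_left hφn (norm_nonneg F)
      _ = ‖F‖ := mul_one _
    obtain ⟨m, hm1, hm2⟩ :=
      Submodule.Quotient.norm_mk_lt (Submodule.Quotient.mk a' : A ⧸ N) one_pos
    refine ⟨m, ?_, fun g hg => ?_⟩
    · have : ‖m‖ < ‖F‖ + 1 := lt_of_lt_of_le hm2 (by linarith)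
      exact this.le
    · have hmN : m - a' ∈ N := (Submodule.Quotient.eq N).1 hm1
      have h2 : Tc (m - a') = 0 := hmN
      have h3 : g m - g a' = 0 := by
        have := congrFun h2 (⟨g, hg⟩ : ι)
        simpa [map_sub, Tc] using this
      have h4 : g m = g a' := by linarith
      rw [h4, ha'' ⟨g, hg⟩]



theorem core {c : A}
    (hc : ∀ (ι : Type w) (l : Filter ι), l.NeBot →
      ∀ fa : ι → (A →L[ℝ] ℝ),
        (∀ b : A, Tendsto (fun i => circ c (fa i) b) l (𝓝 0)) →
        ∀ F : Bidual A, Tendsto (fun i => F (circ c (fa i))) l (𝓝 0))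
    (P Q : Bidual A) (w v : A →L[ℝ] ℝ) (ra rb σ : A → A →L[ℝ] ℝ) (Cσ : ℝ) (hCσ : 0 ≤ Cσ)
    (hG1 : ∀ x y, ra x y = rb y x)
    (hG2 : ∀ x, w x = Q (ra x))
    (hG3 : ∀ y, v y = P (rb y))
    (hG4 : ∀ x, circ c (σ x) = ra x)
    (hG5 : ∀ x y, |σ x y| ≤ Cσ * ‖x‖ * ‖y‖) :
    P w = Q v := by
  classical
  -- choice functions from Helly's lemma
  let cP : Finset (A →L[ℝ] ℝ) → A := fun s => (helly P s).choose
  have hcP : ∀ s, ‖cP s‖ ≤ ‖P‖ + 1 ∧ ∀ g ∈ s, g (cP s) = P g := fun s => (helly P s).choose_spec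
  let cQ : Finset (A →L[ℝ] ℝ) → A := fun s => (helly Q s).choose
  have hcQ : ∀ s, ‖cQ s‖ ≤ ‖Q‖ + 1 ∧ ∀ g ∈ s, g (cQ s) = Q g := fun s => (helly Q s).choose_spec
  -- the recursive construction of the two sequences
  let step : Finset (A →L[ℝ] ℝ) × Finset (A →L[ℝ] ℝ) →
      Finset (A →L[ℝ] ℝ) × Finset (A →L[ℝ] ℝ) := fun st =>
    let S' := insert (rb (cQ st.2)) st.1
    (S', insert (ra (cP S')) st.2)
  let init : Finset (A →L[ℝ] ℝ) × Finset (A →L[ℝ] ℝ) :=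
    ({w}, insert (ra (cP {w})) {v})
  let st : ℕ → Finset (A →L[ℝ] ℝ) × Finset (A →L[ℝ] ℝ) := fun n => step^[n] init
  let a : ℕ → A := fun m => cP (st m).1
  let b : ℕ → A := fun n => cQ (st n).2
  have hst0 : st 0 = init := rfl
  have hstsucc : ∀ n, st (n+1) = step (st n) := fun n => Function.iterate_succ_apply' step n init
  have hS_succ : ∀ n, (st (n+1)).1 = insert (rb (b n)) (st n).1 := by
    intro n; rw [hstsucc n]
  have hT_succ : ∀ n, (st (n+1)).2 = insert (ra (a (n+1))) (st n).2 := by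
    intro n
    rw [hstsucc n]
    show insert (ra (cP (insert (rb (cQ (st n).2)) (st n).1))) (st n).2 = _
    congr 1
    show ra (cP _) = ra (a (n+1))
    congr 1
    show cP _ = cP (st (n+1)).1
    rw [hS_succ n]
  have monoS : ∀ n, (st n).1 ⊆ (st (n+1)).1 := by
    intro n; rw [hS_succ n]; exact Finset.subset_insert _ _
  have monoT : ∀ n, (st n).2 ⊆ (st (n+1)).2 := by
    intro n; rw [hT_succ n]; exact Finset.subset_insert _ _
  have monoS' : ∀ {m n}, m ≤ n → (st m).1 ⊆ (st n).1 := by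
    intro m n h
    induction n with
    | zero => rw [Nat.le_zero.1 h]
    | succ n ih =>
      rcases Nat.lt_or_ge m (n+1) with h' | h'
      · exact (ih (Nat.lt_succ_iff.1 h')).trans (monoS n)
      · rw [Nat.le_antisymm h h']
  have monoT' : ∀ {m n}, m ≤ n → (st m).2 ⊆ (st n).2 := by
    intro m n h
    induction n with
    | zero => rw [Nat.le_zero.1 h]
    | succ n ih =>
      rcases Nat.lt_or_ge m (n+1) with h' | h'
      · exact (ih (Nat.lt_succ_iff.1 h')).trans (monoT n)
      · rw [Nat.le_antisymm h h']
  have hw : ∀ n, w ∈ (st n).1 := by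
    intro n
    refine monoS' (Nat.zero_le n) ?_
    rw [hst0]
    exact Finset.mem_singleton_self w
  have hv : ∀ n, v ∈ (st n).2 := by
    intro n
    refine monoT' (Nat.zero_le n) ?_
    rw [hst0]
    exact Finset.mem_insert_of_mem (Finset.mem_singleton_self v)
  have hrb : ∀ {k m}, k < m → rb (b k) ∈ (st m).1 := by
    intro k m hkm
    refine monoS' (Nat.succ_le_of_lt hkm) ?_
    rw [hS_succ k]
    exact Finset.mem_insert_self _ _
  have hra : ∀ {k n}, k ≤ n → ra (a k) ∈ (st n).2 := by
    intro k n hkn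
    refine monoT' hkn ?_
    cases k with
    | zero =>
      rw [hst0]
      exact Finset.mem_insert_self _ _
    | succ k =>
      rw [hT_succ k]
      exact Finset.mem_insert_self _ _
  -- the two ultrafilter-limit functionals
  have hbound_a : ∀ m y, |σ (a m) y| ≤ (Cσ * (‖P‖ + 1)) * ‖y‖ := by
    intro m y
    calc |σ (a m) y| ≤ Cσ * ‖a m‖ * ‖y‖ := hG5 _ _
    _ ≤ Cσ * (‖P‖ + 1) * ‖y‖ := by
        have h1 : Cσ * ‖a m‖ ≤ Cσ * (‖P‖ + 1) :=
          mul_le_mul_of_nonneg_left (hcP _).1 hCσ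
        exact mul_le_mul_of_nonneg_right h1 (norm_nonneg y)
  let k₁ : A →L[ℝ] ℝ := ulimCLM (fun m => σ (a m)) (Cσ * (‖P‖ + 1)) hbound_a
  have hbound_b : ∀ n (g : A →L[ℝ] ℝ), |(incl A (b n)) g| ≤ (‖Q‖ + 1) * ‖g‖ := by
    intro n g
    have h1 : |g (b n)| ≤ ‖g‖ * ‖b n‖ := by
      have := g.le_opNorm (b n)
      rwa [Real.norm_eq_abs] at this
    calc |(incl A (b n)) g| = |g (b n)| := rfl
    _ ≤ ‖g‖ * ‖b n‖ := h1
    _ ≤ ‖g‖ * (‖Q‖ + 1) := mul_le_mul_of_nonneg_left (hcQ _).1 (norm_nonneg g)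
    _ = (‖Q‖ + 1) * ‖g‖ := mul_comm _ _
  let η : Bidual A := ulimCLM (fun n => incl A (b n)) (‖Q‖ + 1) hbound_b
  -- apply the LW*W property
  have key := hc_seq hc (fun m => σ (a m)) k₁
    (fun bb => ulimCLM_tendsto (fun m => σ (a m)) (Cσ * (‖P‖ + 1)) hbound_a (bb * c)) η
  -- identify the moving side as the constant P w
  have hconst : ∀ m, η (circ c (σ (a m))) = P w := by
    intro m
    rw [hG4 (a m)]
    have h1 : η (ra (a m)) = Q (ra (a m)) := by
      refine ulimCLM_eventually _ _ _ (m := m) (fun n hn => ?_)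
      show (ra (a m)) (b n) = Q (ra (a m))
      exact (hcQ (st n).2).2 _ (hra hn)
    rw [h1, ← hG2 (a m)]
    exact (hcP (st m).1).2 _ (hw m)
  have hlim1 : η (circ c k₁) = P w := by
    refine tendsto_nhds_unique key ?_
    have : (fun m => η (circ c (σ (a m)))) = fun _ => P w := funext hconst
    rw [this]
    exact tendsto_const_nhds
  -- identify the limit side as the constant Q v
  have hk₁ : ∀ n, (circ c k₁) (b n) = Q v := by
    intro n
    show k₁ (b n * c) = Q v
    have h1 : k₁ (b n * c) = P (rb (b n)) := by
      refine ulimCLM_eventually _ _ _ (m := n + 1) (fun m hm => ?_)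
      have h2 : σ (a m) (b n * c) = (circ c (σ (a m))) (b n) := rfl
      rw [h2, hG4 (a m), hG1 (a m) (b n)]
      exact (hcP (st m).1).2 _ (hrb (Nat.lt_of_succ_le hm))
    rw [h1, ← hG3 (b n)]
    exact (hcQ (st n).2).2 _ (hv n)
  have hlim2 : η (circ c k₁) = Q v := by
    refine ulimCLM_eventually _ _ _ (m := 0) (fun n _ => ?_)
    exact hk₁ n
  rw [← hlim1, hlim2]



-- small computational lemmas
theorem circ_fdot (c : A) (f : A →L[ℝ] ℝ) (x : A) :
    circ c (fdot f x) = fdot (circ c f) x := by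
  ext y
  show f (x * (y * c)) = f ((x * y) * c)
  rw [mul_assoc]

theorem circ_circ (c : A) (f : A →L[ℝ] ℝ) (x : A) :
    circ c (circ x f) = circ (c * x) f := by
  ext y
  show f ((y * c) * x) = f (y * (c * x))
  rw [mul_assoc]

theorem circ_of_mul (c : A) (f : A →L[ℝ] ℝ) (x : A) :
    circ x (circ c f) = circ (x * c) f := by
  ext y
  show f ((y * x) * c) = f (y * (x * c))
  rw [mul_assoc]

theorem arens1_incl_apply (F : Bidual A) (c : A) (g : A →L[ℝ] ℝ) :
    arens1 F (incl A c) g = F (circ c g) := by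
  show F (Gdot (incl A c) g) = F (circ c g)
  congr 1


/-- the central identity: the two Arens products agree on `c·A*`. -/
theorem wap_core
    (hc : ∀ (ι : Type w) (l : Filter ι), l.NeBot →
      ∀ fa : ι → (A →L[ℝ] ℝ),
        (∀ b : A, Tendsto (fun i => circ c (fa i) b) l (𝓝 0)) →
        ∀ F : Bidual A, Tendsto (fun i => F (circ c (fa i))) l (𝓝 0))
    (F G : Bidual A) (f : A →L[ℝ] ℝ) :
    arens1 F G (circ c f) = arens2 F G (circ c f) := by
  refine core hc F G (Gdot G (circ c f)) (oF (circ c f) F)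
    (fun x => fdot (circ c f) x) (fun y => circ y (circ c f)) (fun x => fdot f x)
    ‖f‖ (norm_nonneg f) (fun x y => rfl) (fun x => rfl) (fun y => rfl)
    (fun x => circ_fdot c f x) (fun x y => ?_)
  show |f (x * y)| ≤ ‖f‖ * ‖x‖ * ‖y‖
  calc |f (x * y)| ≤ ‖f‖ * ‖x * y‖ := by
        have := f.le_opNorm (x * y); rwa [Real.norm_eq_abs] at this
  _ ≤ ‖f‖ * (‖x‖ * ‖y‖) := mul_le_mul_of_nonneg_left (norm_mul_le x y) (norm_nonneg f)
  _ = ‖f‖ * ‖x‖ * ‖y‖ := (mul_assoc _ _ _).symm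

theorem claim1
    (hc : ∀ (ι : Type w) (l : Filter ι), l.NeBot →
      ∀ fa : ι → (A →L[ℝ] ℝ),
        (∀ b : A, Tendsto (fun i => circ c (fa i) b) l (𝓝 0)) →
        ∀ F : Bidual A, Tendsto (fun i => F (circ c (fa i))) l (𝓝 0))
    (F H : Bidual A) (f : A →L[ℝ] ℝ) :
    arens1 (arens1 F (incl A c)) H f = H (oF f (arens1 F (incl A c))) := by
  have hmain : H (oF f (arens1 F (incl A c))) = F (circ c (Gdot H f)) := by
    refine core hc H F (oF f (arens1 F (incl A c))) (circ c (Gdot H f))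
      (fun x => circ (c * x) f) (fun y => fdot f (y * c)) (fun x => circ x f)
      ‖f‖ (norm_nonneg f) (fun x y => ?_) (fun x => ?_) (fun y => rfl)
      (fun x => circ_circ c f x) (fun x y => ?_)
    · show f (y * (c * x)) = f ((y * c) * x)
      rw [mul_assoc]
    · show (arens1 F (incl A c)) (circ x f) = F (circ (c * x) f)
      rw [arens1_incl_apply, circ_circ]
    · show |f (y * x)| ≤ ‖f‖ * ‖x‖ * ‖y‖
      calc |f (y * x)| ≤ ‖f‖ * ‖y * x‖ := by
            have := f.le_opNorm (y * x); rwa [Real.norm_eq_abs] at this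
      _ ≤ ‖f‖ * (‖y‖ * ‖x‖) := mul_le_mul_of_nonneg_left (norm_mul_le y x) (norm_nonneg f)
      _ = ‖f‖ * ‖x‖ * ‖y‖ := by ring
  have h2 : arens1 (arens1 F (incl A c)) H f = F (circ c (Gdot H f)) := by
    show (arens1 F (incl A c)) (Gdot H f) = _
    rw [arens1_incl_apply]
  rw [h2, hmain]

theorem claim2
    (hc : ∀ (ι : Type w) (l : Filter ι), l.NeBot →
      ∀ fa : ι → (A →L[ℝ] ℝ),
        (∀ b : A, Tendsto (fun i => circ c (fa i) b) l (𝓝 0)) →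
        ∀ F : Bidual A, Tendsto (fun i => F (circ c (fa i))) l (𝓝 0))
    (F H : Bidual A) (f : A →L[ℝ] ℝ) :
    arens2 H (arens1 F (incl A c)) f = H (Gdot (arens1 F (incl A c)) f) := by
  have hwap := wap_core hc H F f
  have lemB : Gdot (arens1 F (incl A c)) f = Gdot F (circ c f) := by
    ext x
    show (arens1 F (incl A c)) (fdot f x) = F (fdot (circ c f) x)
    rw [arens1_incl_apply, circ_fdot]
  have lemC : circ c (oF f H) = oF (circ c f) H := by
    ext x
    show H (circ (x * c) f) = H (circ x (circ c f))
    rw [circ_of_mul]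
  have h1 : arens2 H (arens1 F (incl A c)) f = F (circ c (oF f H)) := by
    show (arens1 F (incl A c)) (oF f H) = _
    rw [arens1_incl_apply]
  rw [h1, lemC, lemB]
  have h2 : arens1 H F (circ c f) = H (Gdot F (circ c f)) := rfl
  have h3 : arens2 H F (circ c f) = F (oF (circ c f) H) := rfl
  rw [← h3, ← hwap, h2]



end Arens


namespace Arens

variable {A : Type u} [NonUnitalNormedRing A] [NormedSpace ℝ A]
  [IsScalarTower ℝ A A] [SMulCommClass ℝ A A] [CompleteSpace A]

/-- `G ∈ Z₁`: the map `F ↦ G·F` (first Arens product) is weak*–weak* continuous. -/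
def memZ1 (G : Bidual A) : Prop :=
  ∀ (ι : Type v) (l : Filter ι), l.NeBot →
    ∀ (Fa : ι → Bidual A) (F : Bidual A),
      (∀ g : A →L[ℝ] ℝ, Tendsto (fun i => Fa i g) l (𝓝 (F g))) →
      ∀ f : A →L[ℝ] ℝ, Tendsto (fun i => arens1 G (Fa i) f) l (𝓝 (arens1 G F f))

/-- `G ∈ Z₂`: the map `F ↦ F∘G` (second Arens product) is weak*–weak* continuous. -/
def memZ2 (G : Bidual A) : Prop :=
  ∀ (ι : Type v) (l : Filter ι), l.NeBot →
    ∀ (Fa : ι → Bidual A) (F : Bidual A),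
      (∀ g : A →L[ℝ] ℝ, Tendsto (fun i => Fa i g) l (𝓝 (F g))) →
      ∀ f : A →L[ℝ] ℝ, Tendsto (fun i => arens2 (Fa i) G f) l (𝓝 (arens2 F G f))

/-- If `c ∈ A` has the `LW*W`-property and `A* = A*·c`, then `A**·c ⊆ Z₁ ∩ Z₂`
and `c·A* ⊆ wap(A) ⊆ A*·c`. -/
theorem stmt12 (c : A)
    (hc : ∀ (ι : Type v) (l : Filter ι), l.NeBot →
      ∀ fa : ι → (A →L[ℝ] ℝ),
        (∀ b : A, Tendsto (fun i => circ c (fa i) b) l (𝓝 0)) →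
        ∀ F : Bidual A, Tendsto (fun i => F (circ c (fa i))) l (𝓝 0))
    (hfac : ∀ g : A →L[ℝ] ℝ, ∃ f : A →L[ℝ] ℝ, fdot f c = g) :
    (∀ F : Bidual A, memZ1 (arens1 F (incl A c)) ∧ memZ2 (arens1 F (incl A c))) ∧
    (∀ f : A →L[ℝ] ℝ, wap (circ c f)) ∧
    (∀ g : A →L[ℝ] ℝ, wap g → ∃ f : A →L[ℝ] ℝ, fdot f c = g) := by
  refine ⟨fun F => ⟨?_, ?_⟩, fun f F G => wap_core hc F G f, fun g _ => hfac g⟩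
  · intro ι l hl Fa F0 hFa f
    have key : arens1 (arens1 F (incl A c)) F0 f = F0 (oF f (arens1 F (incl A c))) :=
      claim1 hc F F0 f
    rw [key]
    exact (hFa (oF f (arens1 F (incl A c)))).congr
      (fun i => (claim1 hc F (Fa i) f).symm)
  · intro ι l hl Fa F0 hFa f
    have key : arens2 F0 (arens1 F (incl A c)) f =
        F0 (Gdot (arens1 F (incl A c)) f) := claim2 hc F F0 f
    rw [key]
    exact (hFa (Gdot (arens1 F (incl A c)) f)).congr
      (fun i => (claim2 hc F (Fa i) f).symm)

end Arens
end

section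
/- Let A and B be Banach algebras and h : A → B a bounded surjective algebra homomorphism. If A has the LW*W-property, then B has the LW*W-property. -/
open Filter Topology ContinuousLinearMap

universe u v

namespace Arens

/-- If `h : A → B` is a surjective continuous linear map between Banach spaces, then every
`G` in the bidual of `B` lifts along the double adjoint: there exists `F` in the bidual of `A`
with `F (ψ ∘ h) = G ψ` for all `ψ`. -/
theorem exists_bidual_lift {A B : Type*} [NormedAddCommGroup A] [NormedSpace ℝ A]
    [NormedAddCommGroup B] [NormedSpace ℝ B] [CompleteSpace A] [CompleteSpace B]
    (h : A →L[ℝ] B) (hsurj : Function.Surjective h)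
    (G : (B →L[ℝ] ℝ) →L[ℝ] ℝ) :
    ∃ F : (A →L[ℝ] ℝ) →L[ℝ] ℝ, ∀ ψ : B →L[ℝ] ℝ, F (ψ.comp h) = G ψ := by
  obtain ⟨C, Cpos, hC⟩ := h.exists_preimage_norm_le hsurj
  -- the adjoint
  set T : (B →L[ℝ] ℝ) →ₗ[ℝ] (A →L[ℝ] ℝ) :=
    { toFun := fun ψ => ψ.comp h
      map_add' := fun ψ φ => by ext x; simp
      map_smul' := fun c ψ => by ext x; simp } with hT
  have hbound : ∀ ψ : B →L[ℝ] ℝ, ‖ψ‖ ≤ C * ‖T ψ‖ := by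
    intro ψ
    refine ψ.opNorm_le_bound (by positivity) fun b => ?_
    obtain ⟨a, ha, hna⟩ := hC b
    calc ‖ψ b‖ = ‖(T ψ) a‖ := by simp [hT, ha]
      _ ≤ ‖T ψ‖ * ‖a‖ := (T ψ).le_opNorm a
      _ ≤ ‖T ψ‖ * (C * ‖b‖) := by
          exact mul_le_mul_of_nonneg_left hna (norm_nonneg _)
      _ = C * ‖T ψ‖ * ‖b‖ := by ring
  have hinj : Function.Injective T := by
    intro ψ φ hψφ
    have : ‖ψ - φ‖ ≤ C * ‖T (ψ - φ)‖ := hbound _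
    rw [map_sub, hψφ, sub_self, norm_zero, mul_zero] at this
    exact sub_eq_zero.mp (norm_le_zero_iff.mp this)
  set e := LinearEquiv.ofInjective T hinj with he
  set g₀ : LinearMap.range T →ₗ[ℝ] ℝ := G.toLinearMap.comp e.symm.toLinearMap with hg₀
  have hg₀b : ∀ s : LinearMap.range T, ‖g₀ s‖ ≤ (‖G‖ * C) * ‖(s : A →L[ℝ] ℝ)‖ := by
    intro s
    obtain ⟨ψ, hψ⟩ := s.2
    have hs : s = e ψ := by
      apply Subtype.ext; simp [he, LinearEquiv.ofInjective_apply, hψ]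
    have hsymm : e.symm s = ψ := by rw [hs, LinearEquiv.symm_apply_apply]
    have hval : (s : A →L[ℝ] ℝ) = T ψ := by rw [hs]; rfl
    calc ‖g₀ s‖ = ‖G ψ‖ := by simp [hg₀, hsymm]
      _ ≤ ‖G‖ * ‖ψ‖ := G.le_opNorm ψ
      _ ≤ ‖G‖ * (C * ‖T ψ‖) := mul_le_mul_of_nonneg_left (hbound ψ) (norm_nonneg G)
      _ = (‖G‖ * C) * ‖(s : A →L[ℝ] ℝ)‖ := by rw [hval]; ring
  set F₀ : LinearMap.range T →L[ℝ] ℝ := g₀.mkContinuous (‖G‖ * C) (fun s => le_of_le_of_eq (hg₀b s) rfl) with hF₀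
  obtain ⟨F, hFext, -⟩ := exists_extension_norm_eq (LinearMap.range T) F₀
  refine ⟨F, fun ψ => ?_⟩
  have hmem : ψ.comp h ∈ LinearMap.range T := ⟨ψ, rfl⟩
  have := hFext ⟨ψ.comp h, hmem⟩
  rw [this]
  show g₀ ⟨ψ.comp h, hmem⟩ = G ψ
  have hs : (⟨ψ.comp h, hmem⟩ : LinearMap.range T) = e ψ := by
    apply Subtype.ext; simp [he, LinearEquiv.ofInjective_apply]; rfl
  simp [hg₀, hs]

end Arens

namespace Arens

variable {A : Type u} [NonUnitalNormedRing A] [NormedSpace ℝ A]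
  [IsScalarTower ℝ A A] [SMulCommClass ℝ A A] [CompleteSpace A]

/-- A Banach algebra `X` has the `LW*W`-property: for every `a ∈ X` and net
`(f_α) ⊆ X*`, `a·f_α → 0` weak* implies `a·f_α → 0` weakly, where
`⟨a·f, x⟩ = ⟨f, xa⟩`. -/
def hasLWW (X : Type u) [NonUnitalNormedRing X] [NormedSpace ℝ X]
    [IsScalarTower ℝ X X] [SMulCommClass ℝ X X] : Prop :=
  ∀ (a : X) (ι : Type v) (l : Filter ι), l.NeBot →
    ∀ fa : ι → (X →L[ℝ] ℝ),
      (∀ x : X, Tendsto (fun i => circ a (fa i) x) l (𝓝 0)) →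
      ∀ F : Bidual X, Tendsto (fun i => F (circ a (fa i))) l (𝓝 0)

/-- If `h : A → B` is a bounded surjective algebra homomorphism and `A` has the
`LW*W`-property, then `B` has the `LW*W`-property. -/
theorem stmt13 {B : Type u} [NonUnitalNormedRing B] [NormedSpace ℝ B]
    [IsScalarTower ℝ B B] [SMulCommClass ℝ B B] [CompleteSpace B]
    (h : A →L[ℝ] B) (hmul : ∀ x y : A, h (x * y) = h x * h y)
    (hsurj : Function.Surjective h)
    (hA : hasLWW.{u, v} A) : hasLWW.{u, v} B := by
  intro b ι l hl fb hweak G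
  obtain ⟨a, rfl⟩ := hsurj b
  obtain ⟨F, hF⟩ := exists_bidual_lift h hsurj G
  set ga : ι → (A →L[ℝ] ℝ) := fun i => (fb i).comp h with hga
  have hkey : ∀ i, circ a (ga i) = (circ (h a) (fb i)).comp h := by
    intro i
    ext x
    show (fb i) (h (x * a)) = (fb i) (h x * h a)
    rw [hmul]
  have hweak' : ∀ x : A, Tendsto (fun i => circ a (ga i) x) l (𝓝 0) := by
    intro x
    have := hweak (h x)
    refine this.congr fun i => ?_
    rw [hkey i]
    rfl
  have := hA a ι l hl ga hweak' F
  refine this.congr fun i => ?_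
  rw [hkey i, hF]


end Arens
end

section
/- Let A be a Banach algebra such that for all nets (a_α) ⊆ A and (f_β) ⊆ A* the iterated limits lim_α lim_β ⟨f_β, a_α⟩ and lim_β lim_α ⟨f_β, a_α⟩ agree whenever both exist (taking a_α weak* convergent in A** and f_β weak* convergent in A*). If A*A = A* or AA* = A*, then A is Arens regular. -/
open Filter Topology ContinuousLinearMap

universe u v

namespace Arens

set_option maxHeartbeats 1000000 in
/-- Helly-type lemma: finite weak*-approximation of a bidual element by elements
of the ball of radius `‖F‖ + 1`. -/
lemma helly_aux {E : Type*} [NormedAddCommGroup E] [NormedSpace ℝ E]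
    (F : (E →L[ℝ] ℝ) →L[ℝ] ℝ) (s : Finset (E →L[ℝ] ℝ)) {ε : ℝ} (hε : 0 < ε) :
    ∃ a : E, ‖a‖ ≤ ‖F‖ + 1 ∧ ∀ h ∈ s, |h a - F h| < ε := by
  classical
  set r : ℝ := ‖F‖ + 1 with hr
  have hr0 : 0 < r := by positivity
  set Φ : E →L[ℝ] (s → ℝ) := ContinuousLinearMap.pi (fun h : s => (h : E →L[ℝ] ℝ)) with hΦ
  set T : Set (s → ℝ) := Φ '' Metric.closedBall 0 r with hT
  set y : s → ℝ := fun h => F h with hy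
  have hyT : y ∈ closure T := by
    by_contra hc
    obtain ⟨φ, u, hu1, hu2⟩ :=
      geometric_hahn_banach_closed_point
        (((convex_closedBall (0:E) r).linear_image Φ.toLinearMap).closure)
        isClosed_closure hc
    have h0T : (0 : s → ℝ) ∈ T := ⟨0, by simp [hr0.le], by simp⟩
    have hu0 : 0 < u := by simpa using hu1 0 (subset_closure h0T)
    set c : s → ℝ := fun h => φ (fun j => if h = j then (1:ℝ) else 0) with hc'
    have hφ : ∀ z : s → ℝ, φ z = ∑ h : s, z h * c h := by
      intro z
      conv_lhs => rw [pi_eq_sum_univ z]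
      rw [map_sum]
      exact Finset.sum_congr rfl fun h _ => by rw [map_smul]; simp [c, smul_eq_mul]
    set H : E →L[ℝ] ℝ := ∑ h : s, c h • (h : E →L[ℝ] ℝ) with hH
    have hHa : ∀ a : E, H a = φ (Φ a) := by
      intro a
      rw [hφ]
      simp only [hH, ContinuousLinearMap.sum_apply, ContinuousLinearMap.smul_apply, smul_eq_mul]
      exact Finset.sum_congr rfl fun h _ => by simp [Φ, mul_comm]
    have hFH : F H = φ y := by
      rw [hφ]
      simp only [hH, map_sum, map_smul, smul_eq_mul]
      exact Finset.sum_congr rfl fun h _ => by simp [y, mul_comm]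
    have hball : ∀ a : E, ‖a‖ ≤ r → H a < u := by
      intro a ha
      rw [hHa]
      exact hu1 _ (subset_closure ⟨a, by simpa [Metric.mem_closedBall] using ha, rfl⟩)
    have hHnorm : ‖H‖ ≤ u / r := by
      apply ContinuousLinearMap.opNorm_le_bound _ (by positivity)
      intro x
      rcases eq_or_ne x 0 with rfl | hx
      · simp
      · have hxn : 0 < ‖x‖ := norm_pos_iff.2 hx
        set a : E := (r / ‖x‖) • x with ha
        have hna : ‖a‖ ≤ r := by
          rw [ha, norm_smul, norm_div, Real.norm_eq_abs, abs_of_pos hr0, Real.norm_eq_abs,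
            abs_of_pos hxn, div_mul_cancel₀ _ hxn.ne']
        have h1 : H a < u := hball a hna
        have h2 : H (-a) < u := by
          have := hball (-a) (by simpa using hna); simpa using this
        have habs : |H a| ≤ u := by
          rw [abs_le]; constructor
          · nlinarith [h2, map_neg H a]
          · linarith
        have hHa' : H a = (r / ‖x‖) * H x := by rw [ha, map_smul, smul_eq_mul]
        have : |H x| = (‖x‖ / r) * |H a| := by
          rw [hHa', abs_mul, abs_of_pos (by positivity : (0:ℝ) < r / ‖x‖)]
          field_simp
        rw [Real.norm_eq_abs, this]
        have h3 : ‖x‖ / r * |H a| ≤ ‖x‖ / r * u :=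
          mul_le_mul_of_nonneg_left habs (by positivity)
        calc ‖x‖ / r * |H a| ≤ ‖x‖ / r * u := h3
          _ = u / r * ‖x‖ := by ring
    have hfin : F H ≤ ‖F‖ * (u / r) := by
      calc F H ≤ |F H| := le_abs_self _
        _ ≤ ‖F‖ * ‖H‖ := by rw [← Real.norm_eq_abs]; exact F.le_opNorm H
        _ ≤ ‖F‖ * (u / r) := mul_le_mul_of_nonneg_left hHnorm (norm_nonneg F)
    have hFr : ‖F‖ < r := by rw [hr]; linarith
    have : φ y < u := by
      rw [← hFH]
      calc F H ≤ ‖F‖ * (u / r) := hfin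
        _ < r * (u / r) := by
            apply mul_lt_mul_of_pos_right hFr (by positivity)
        _ = u := by field_simp
    linarith
  rw [Metric.mem_closure_iff] at hyT
  obtain ⟨z, hzT, hdz⟩ := hyT ε hε
  obtain ⟨a, haball, rfl⟩ := hzT
  refine ⟨a, by simpa [Metric.mem_closedBall] using haball, ?_⟩
  intro h hh
  have := dist_le_pi_dist y (Φ a) ⟨h, hh⟩
  have h2 : dist (y ⟨h, hh⟩) (Φ a ⟨h, hh⟩) < ε := lt_of_le_of_lt this hdz
  rw [Real.dist_eq] at h2
  have : Φ a ⟨h, hh⟩ = h a := rfl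
  rw [this] at h2
  have : y ⟨h, hh⟩ = F h := rfl
  rw [this] at h2
  rwa [abs_sub_comm] at h2

/-- A uniformly bounded sequence of functionals has a pointwise ultrafilter limit
which is again a continuous linear functional. -/
lemma ultralim_aux {E : Type*} [NormedAddCommGroup E] [NormedSpace ℝ E]
    (T : ℕ → (E →L[ℝ] ℝ)) (C : ℝ) (hC : ∀ n, ‖T n‖ ≤ C) (p : Ultrafilter ℕ) :
    ∃ S : E →L[ℝ] ℝ, ∀ x : E, Tendsto (fun n => T n x) (↑p) (𝓝 (S x)) := by
  have hCx : ∀ (x : E) (n : ℕ), T n x ∈ Set.Icc (-(C * ‖x‖)) (C * ‖x‖) := by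
    intro x n
    have h1 : |T n x| ≤ C * ‖x‖ := by
      calc |T n x| = ‖T n x‖ := (Real.norm_eq_abs _).symm
        _ ≤ ‖T n‖ * ‖x‖ := (T n).le_opNorm x
        _ ≤ C * ‖x‖ := mul_le_mul_of_nonneg_right (hC n) (norm_nonneg x)
    rw [Set.mem_Icc]; constructor <;> [linarith [neg_abs_le (T n x)]; linarith [le_abs_self (T n x)]]
  have hlim : ∀ x : E, ∃ L : ℝ, Tendsto (fun n => T n x) (↑p) (𝓝 L) := by
    intro x
    obtain ⟨L, _, hL⟩ := (isCompact_Icc (a := -(C * ‖x‖)) (b := C * ‖x‖)).ultrafilter_le_nhds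
      (p.map (fun n => T n x))
      (by rw [Ultrafilter.coe_map]
          exact Filter.tendsto_principal.mpr (Filter.Eventually.of_forall (hCx x)))
    exact ⟨L, hL⟩
  choose lim hlim using hlim
  have hadd : ∀ x y, lim (x + y) = lim x + lim y := by
    intro x y
    have h1 : Tendsto (fun n => T n (x + y)) (↑p) (𝓝 (lim x + lim y)) := by
      have := (hlim x).add (hlim y)
      simpa [map_add] using this
    exact tendsto_nhds_unique (hlim (x + y)) h1
  have hsmul : ∀ (c : ℝ) x, lim (c • x) = c * lim x := by
    intro c x
    have h1 : Tendsto (fun n => T n (c • x)) (↑p) (𝓝 (c * lim x)) := by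
      have := (hlim x).const_mul c
      simpa [map_smul, smul_eq_mul] using this
    exact tendsto_nhds_unique (hlim (c • x)) h1
  have hbnd : ∀ x, ‖lim x‖ ≤ C * ‖x‖ := by
    intro x
    have hmem : lim x ∈ Set.Icc (-(C * ‖x‖)) (C * ‖x‖) :=
      isClosed_Icc.mem_of_tendsto (hlim x) (Filter.Eventually.of_forall (hCx x))
    rw [Real.norm_eq_abs, abs_le]
    exact ⟨by linarith [hmem.1], hmem.2⟩
  exact ⟨LinearMap.mkContinuous
    { toFun := lim, map_add' := hadd, map_smul' := hsmul } C hbnd, hlim⟩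

/-- Convergence from an eventual `1/(k+1)` error bound. -/
lemma tendsto_of_error_bound (x : ℕ → ℝ) (c : ℝ) (N : ℕ)
    (hx : ∀ k, N ≤ k → |x k - c| < 1 / ((k : ℝ) + 1)) : Tendsto x atTop (𝓝 c) := by
  rw [Metric.tendsto_atTop]
  intro ε hε
  obtain ⟨M, hM⟩ := exists_nat_one_div_lt hε
  refine ⟨max N M, fun n hn => ?_⟩
  rw [Real.dist_eq]
  have h1 := hx n (le_trans (le_max_left _ _) hn)
  have hMn : (M : ℝ) ≤ (n : ℝ) := by
    exact_mod_cast le_trans (le_max_right _ _) hn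
  have h2 : (1:ℝ)/((n:ℝ)+1) ≤ 1/((M:ℝ)+1) := by
    apply one_div_le_one_div_of_le (by positivity)
    linarith
  linarith

variable {A : Type u} [NonUnitalNormedRing A] [NormedSpace ℝ A]
  [IsScalarTower ℝ A A] [SMulCommClass ℝ A A] [CompleteSpace A]

set_option maxHeartbeats 4000000 in
/-- If for all nets `(a_α) ⊆ A` (weak* convergent in `A**`) and `(f_β) ⊆ A*`
(weak* convergent in `A*`) the two iterated limits of `⟨f_β, a_α⟩` agree whenever
both exist, and `A*A = A*` or `AA* = A*`, then `A` is Arens regular. -/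
theorem stmt17
    (hdl : ∀ (ι κ : Type v) (l : Filter ι) (m : Filter κ), l.NeBot → m.NeBot →
      ∀ (a : ι → A) (f : κ → (A →L[ℝ] ℝ)),
        (∃ F : Bidual A, ∀ g : A →L[ℝ] ℝ, Tendsto (fun i => g (a i)) l (𝓝 (F g))) →
        (∃ h : A →L[ℝ] ℝ, ∀ x : A, Tendsto (fun j => f j x) m (𝓝 (h x))) →
        ∀ (L M : ℝ) (φ : ι → ℝ) (ψ : κ → ℝ),
          (∀ i, Tendsto (fun j => f j (a i)) m (𝓝 (φ i))) →
          Tendsto φ l (𝓝 L) →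
          (∀ j, Tendsto (fun i => f j (a i)) l (𝓝 (ψ j))) →
          Tendsto ψ m (𝓝 M) → L = M)
    (hfac : (∀ g : A →L[ℝ] ℝ, ∃ (f : A →L[ℝ] ℝ) (a : A), fdot f a = g) ∨
            (∀ g : A →L[ℝ] ℝ, ∃ (a : A) (f : A →L[ℝ] ℝ), circ a f = g)) :
    ∀ F G : Bidual A, arens1 F G = arens2 F G := by
  classical
  intro F G
  ext f
  show F ((ContinuousLinearMap.compL ℝ A (A →L[ℝ] ℝ) ℝ G) (dotF A f))
     = G ((ContinuousLinearMap.compL ℝ A (A →L[ℝ] ℝ) ℝ F) (circF A f))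
  set Gf : A →L[ℝ] ℝ := (ContinuousLinearMap.compL ℝ A (A →L[ℝ] ℝ) ℝ G) (dotF A f) with hGfdef
  set fF : A →L[ℝ] ℝ := (ContinuousLinearMap.compL ℝ A (A →L[ℝ] ℝ) ℝ F) (circF A f) with hfFdef
  -- choice functions from Helly's lemma
  have hch : ∀ (K : Bidual A) (s : Finset (A →L[ℝ] ℝ)) (k : ℕ),
      ∃ a : A, ‖a‖ ≤ ‖K‖ + 1 ∧ ∀ h ∈ s, |h a - K h| < 1 / ((k : ℝ) + 1) :=
    fun K s k => helly_aux K s (by positivity)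
  choose χ hχ1 hχ2 using hch
  -- the interleaved recursion
  let next : Finset (A →L[ℝ] ℝ) × Finset (A →L[ℝ] ℝ) → ℕ →
      Finset (A →L[ℝ] ℝ) × Finset (A →L[ℝ] ℝ) := fun st k =>
    let ak := χ F (insert Gf st.1) k
    let bk := χ G (insert fF (insert (fdot f ak) st.2)) k
    (insert (circ bk f) st.1, insert (fdot f ak) st.2)
  let ρ : ℕ → Finset (A →L[ℝ] ℝ) × Finset (A →L[ℝ] ℝ) :=
    fun k => Nat.rec ((∅ : Finset (A →L[ℝ] ℝ)), (∅ : Finset (A →L[ℝ] ℝ)))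
      (fun k ih => next ih k) k
  let a : ℕ → A := fun k => χ F (insert Gf (ρ k).1) k
  let b : ℕ → A := fun k => χ G (insert fF (insert (fdot f (a k)) (ρ k).2)) k
  have hρ : ∀ k, ρ (k + 1) = (insert (circ (b k) f) (ρ k).1, insert (fdot f (a k)) (ρ k).2) :=
    fun k => rfl
  -- membership properties
  have hmemF : ∀ j k, j < k → circ (b j) f ∈ (ρ k).1 := by
    intro j k
    induction k with
    | zero => omega
    | succ k ih =>
      intro hjk
      rw [hρ k]
      rcases Nat.lt_succ_iff_lt_or_eq.mp hjk with h | h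
      · exact Finset.mem_insert_of_mem (ih h)
      · subst h; exact Finset.mem_insert_self _ _
  have hmemG : ∀ j k, j ≤ k → fdot f (a j) ∈ (ρ (k + 1)).2 := by
    intro j k
    induction k with
    | zero =>
      intro hjk
      interval_cases j
      rw [hρ 0]
      exact Finset.mem_insert_self _ _
    | succ k ih =>
      intro hjk
      rw [hρ (k + 1)]
      rcases Nat.le_succ_iff.mp hjk |>.symm with h | h
      · exact h ▸ Finset.mem_insert_self _ _
      · exact Finset.mem_insert_of_mem (ih h)
  -- approximation estimates
  have hP2 : ∀ k, |Gf (a k) - F Gf| < 1 / ((k : ℝ) + 1) :=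
    fun k => hχ2 F (insert Gf (ρ k).1) k Gf (Finset.mem_insert_self _ _)
  have hP3 : ∀ j k, j < k → |(circ (b j) f) (a k) - F (circ (b j) f)| < 1 / ((k : ℝ) + 1) :=
    fun j k hjk => hχ2 F (insert Gf (ρ k).1) k _ (Finset.mem_insert_of_mem (hmemF j k hjk))
  have hP4 : ∀ k, |fF (b k) - G fF| < 1 / ((k : ℝ) + 1) :=
    fun k => hχ2 G (insert fF (insert (fdot f (a k)) (ρ k).2)) k fF (Finset.mem_insert_self _ _)
  have hP5 : ∀ j k, j ≤ k → |(fdot f (a j)) (b k) - G (fdot f (a j))| < 1 / ((k : ℝ) + 1) := by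
    intro j k hjk
    have hmem : fdot f (a j) ∈ insert (fdot f (a k)) (ρ k).2 := by
      have := hmemG j k hjk
      rwa [hρ k] at this
    exact hχ2 G (insert fF (insert (fdot f (a k)) (ρ k).2)) k _ (Finset.mem_insert_of_mem hmem)
  have hA1 : ∀ k, ‖a k‖ ≤ ‖F‖ + 1 := fun k => hχ1 F (insert Gf (ρ k).1) k
  have hB1 : ∀ k, ‖b k‖ ≤ ‖G‖ + 1 :=
    fun k => hχ1 G (insert fF (insert (fdot f (a k)) (ρ k).2)) k
  -- ultrafilter limits
  let p : Ultrafilter ℕ := Ultrafilter.of atTop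
  have hp : (↑p : Filter ℕ) ≤ atTop := Ultrafilter.of_le _
  have hincl : ∀ x : A, ‖incl A x‖ ≤ ‖x‖ := fun x =>
    ContinuousLinearMap.opNorm_le_bound _ (norm_nonneg x) (fun g => by
      have hxg : incl A x g = g x := rfl
      rw [hxg, mul_comm, Real.norm_eq_abs, ← Real.norm_eq_abs]
      exact g.le_opNorm x)
  obtain ⟨F', hF'⟩ := ultralim_aux (fun n => incl A (a n)) (‖F‖ + 1)
    (fun n => (hincl (a n)).trans (hA1 n)) p
  obtain ⟨hstar, hh⟩ := ultralim_aux (fun n => circ (b n) f)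
    (‖circF A f‖ * (‖G‖ + 1))
    (fun n => ((circF A f).le_opNorm (b n)).trans
      (mul_le_mul_of_nonneg_left (hB1 n) (norm_nonneg _))) p
  -- the filters on `ULift ℕ`
  let l : Filter (ULift.{v} ℕ) := (↑p : Filter ℕ).map ULift.up
  have hlne : l.NeBot := p.neBot.map ULift.up
  -- apply the double limit hypothesis
  refine hdl (ULift.{v} ℕ) (ULift.{v} ℕ) l l hlne hlne
    (fun i => a i.down) (fun j => circ (b j.down) f)
    ⟨F', fun g => Filter.tendsto_map'_iff.mpr (hF' g)⟩
    ⟨hstar, fun x => Filter.tendsto_map'_iff.mpr (hh x)⟩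
    (F Gf) (G fF)
    (fun i => Gf (a i.down)) (fun j => fF (b j.down))
    ?_ ?_ ?_ ?_
  · -- ∀ i, lim_j f_j(a_i) = Gf(a_i)
    intro i
    apply Filter.tendsto_map'_iff.mpr
    refine Tendsto.mono_left ?_ hp
    show Tendsto (fun n : ℕ => (fdot f (a i.down)) (b n)) atTop (𝓝 (G (fdot f (a i.down))))
    exact tendsto_of_error_bound _ _ i.down (fun k hk => hP5 i.down k hk)
  · -- lim_i Gf(a_i) = F Gf
    apply Filter.tendsto_map'_iff.mpr
    refine Tendsto.mono_left ?_ hp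
    show Tendsto (fun n : ℕ => Gf (a n)) atTop (𝓝 (F Gf))
    exact tendsto_of_error_bound _ _ 0 (fun k _ => hP2 k)
  · -- ∀ j, lim_i f_j(a_i) = fF(b_j)
    intro j
    apply Filter.tendsto_map'_iff.mpr
    refine Tendsto.mono_left ?_ hp
    show Tendsto (fun n : ℕ => (circ (b j.down) f) (a n)) atTop (𝓝 (F (circ (b j.down) f)))
    exact tendsto_of_error_bound _ _ (j.down + 1) (fun k hk => hP3 j.down k hk)
  · -- lim_j fF(b_j) = G fF
    apply Filter.tendsto_map'_iff.mpr
    refine Tendsto.mono_left ?_ hp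
    show Tendsto (fun n : ℕ => fF (b n)) atTop (𝓝 (G fF))
    exact tendsto_of_error_bound _ _ 0 (fun k _ => hP4 k)

end Arens
end
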